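/- arXiv:1805.02147 — 3 statements merged into one kernel-verified Lean document; each statement's English description precedes it below -/
import Mathlib

section
/- For any n ≥ 2: χ_ℓ(K_n □ K_{1,s}) = n if s < n!, and χ_ℓ(K_n □ K_{1,s}) = n + 1 if s ≥ n!. -/
open SimpleGraph Finset

section ListColoringDefs

variable {V : Type*}

/-- `f` is a proper coloring of `G` choosing each color from the list `L v`. -/
def IsProperListColoring (G : SimpleGraph V) (L : V → Finset ℕ) (f : V → ℕ) : Prop :=
  (∀ v, f v ∈ L v) ∧ ∀ u v, G.Adj u v → f u ≠ f v

/-- `G` admits a proper coloring from the list assignment `L`. -/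
def ListColorable (G : SimpleGraph V) (L : V → Finset ℕ) : Prop :=
  ∃ f, IsProperListColoring G L f

/-- `G` is colorable from every list assignment with lists of size at least `m`. -/
def Choosable (G : SimpleGraph V) (m : ℕ) : Prop :=
  ∀ L : V → Finset ℕ, (∀ v, m ≤ (L v).card) → ListColorable G L

/-- The list chromatic number of `G`. -/
noncomputable def listChromaticNumber (G : SimpleGraph V) : ℕ :=
  sInf { m | Choosable G m }

/-- `G` is strong `k`-chromatic-choosable: `χ(G) = k` and every `(k-1)`-assignment
from which `G` is not colorable is constant. -/
def StrongCC (G : SimpleGraph V) (k : ℕ) : Prop :=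
  G.chromaticNumber = (k : ℕ∞) ∧
    ∀ L : V → Finset ℕ, (∀ v, (L v).card = k - 1) → ¬ ListColorable G L →
      ∀ u v : V, L u = L v

/-- The number of proper `L`-colorings of `G`. -/
noncomputable def numColorings (G : SimpleGraph V) (L : V → Finset ℕ) : ℕ :=
  Set.ncard { f : V → ℕ | IsProperListColoring G L f }

/-- The list color function `P_ℓ(G,k)`: the minimum number of proper `L`-colorings
over all `k`-assignments `L`. -/
noncomputable def listColorFunction (G : SimpleGraph V) (k : ℕ) : ℕ :=
  sInf { n | ∃ L : V → Finset ℕ, (∀ v, (L v).card = k) ∧ n = numColorings G L }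

/-- The chromatic polynomial `P(G,k)`: the number of proper colorings with colors
from `{0, …, k-1}`. -/
noncomputable def chromPoly (G : SimpleGraph V) (k : ℕ) : ℕ :=
  numColorings G (fun _ => Finset.range k)

/-- The join `G ∨ K_p` of `G` with the complete graph on `p` vertices. -/
def joinK (G : SimpleGraph V) (p : ℕ) : SimpleGraph (V ⊕ Fin p) :=
  SimpleGraph.fromRel (fun a b =>
    match a, b with
    | Sum.inl u, Sum.inl v => G.Adj u v
    | _, _ => True)

/-- The star `K_{1,s}`: center `none` adjacent to the `s` leaves. -/
def starGraph (s : ℕ) : SimpleGraph (Option (Fin s)) :=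
  SimpleGraph.fromRel (fun a _ => a = none)

/-- The cycle graph `C_n` on `Fin n` (for `n ≥ 3`). -/
def cycGraph (n : ℕ) : SimpleGraph (Fin n) :=
  SimpleGraph.fromRel (fun a b => b.val = (a.val + 1) % n)

end ListColoringDefs

/-!
A proper colouring of `K_n □ K_{1,s}` is an injective colouring `f` of the centre copy of `K_n`
together with, for each leaf `j`, an injective colouring of the `j`-th copy that differs from `f`
at every vertex. From lists of size `n`, by Hall's theorem the `j`-th copy fails to be colourable
only if the lists `L (i, j)` with `f i` removed have fewer than `n` colours altogether, and this
pins `f` down. So each leaf excludes at most one of the at least `n!` injective centre colourings,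
and `s < n!` leaves cannot exclude them all. For `s ≥ n!`, give the centre the lists
`{0, …, n-1}` and, for each permutation `σ`, some leaf the lists `{σ i} ∪ A` for a common
`(n-1)`-set `A` of fresh colours: the centre is coloured by some `σ`, and the leaf of `σ` would
then need `n` distinct colours from `A`.
-/

open Function

section Transversals

variable {ι α : Type*} [Fintype ι] [DecidableEq α]

theorem exists_injective_mem_of_card_le (t : ι → Finset α)
    (ht : ∀ i, Fintype.card ι ≤ #(t i)) :
    ∃ f : ι → α, Injective f ∧ ∀ i, f i ∈ t i := by
  rw [← all_card_le_biUnion_card_iff_exists_injective]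
  intro w
  obtain rfl | ⟨i, hi⟩ := w.eq_empty_or_nonempty
  · simp
  exact w.card_le_univ.trans ((ht i).trans (card_le_card (subset_biUnion_of_mem t hi)))

theorem exists_injective_mem_of_card_le_card_biUnion (t : ι → Finset α)
    (ht : ∀ i, Fintype.card ι - 1 ≤ #(t i)) (hU : Fintype.card ι ≤ #(univ.biUnion t)) :
    ∃ f : ι → α, Injective f ∧ ∀ i, f i ∈ t i := by
  classical
  rw [← all_card_le_biUnion_card_iff_exists_injective]
  intro w
  obtain rfl | hw := eq_or_ne w univ
  · rwa [card_univ]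
  obtain rfl | ⟨i, hi⟩ := w.eq_empty_or_nonempty
  · simp
  calc #w ≤ Fintype.card ι - 1 := by
        have := (card_lt_iff_ne_univ w).mpr hw
        omega
    _ ≤ #(t i) := ht i
    _ ≤ #(w.biUnion t) := card_le_card (subset_biUnion_of_mem t hi)

theorem mem_and_erase_eq_of_card_biUnion_erase_lt (t : ι → Finset α)
    (ht : ∀ i, Fintype.card ι ≤ #(t i)) {f : ι → α}
    (hf : #(univ.biUnion fun i => (t i).erase (f i)) < Fintype.card ι) (i : ι) :
    f i ∈ t i ∧ (t i).erase (f i) = univ.biUnion fun i => (t i).erase (f i) := by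
  have hsub : (t i).erase (f i) ⊆ univ.biUnion fun i => (t i).erase (f i) :=
    subset_biUnion_of_mem (fun i => (t i).erase (f i)) (mem_univ i)
  have hmem : f i ∈ t i := by
    by_contra h
    have := card_le_card hsub
    rw [erase_eq_of_notMem h] at this
    have := ht i
    omega
  refine ⟨hmem, eq_of_subset_of_card_le hsub ?_⟩
  rw [card_erase_of_mem hmem]
  have := ht i
  omega

theorem eq_of_card_biUnion_erase_lt (t : ι → Finset α) (ht : ∀ i, Fintype.card ι ≤ #(t i))
    {f g : ι → α} (hf : Injective f)
    (hf' : #(univ.biUnion fun i => (t i).erase (f i)) < Fintype.card ι)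
    (hg' : #(univ.biUnion fun i => (t i).erase (g i)) < Fintype.card ι) : f = g := by
  have Hf := mem_and_erase_eq_of_card_biUnion_erase_lt t ht hf'
  have Hg := mem_and_erase_eq_of_card_biUnion_erase_lt t ht hg'
  -- If `f` and `g` agree somewhere, they share the union and so agree everywhere; otherwise
  -- `f` maps injectively into the union of `g`, which is too small.
  by_cases hfg : ∃ i, f i = g i
  · obtain ⟨i, hi⟩ := hfg
    have hU : (univ.biUnion fun i => (t i).erase (f i)) =
        univ.biUnion fun i => (t i).erase (g i) := by
      rw [← (Hf i).2, ← (Hg i).2, hi]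
    funext j
    by_contra hj
    have : f j ∈ (t j).erase (g j) := mem_erase.mpr ⟨hj, (Hf j).1⟩
    rw [(Hg j).2, ← hU, ← (Hf j).2] at this
    simp at this
  · push Not at hfg
    have hsub : univ.image f ⊆ univ.biUnion fun i => (t i).erase (g i) := by
      rintro _ hx
      obtain ⟨i, -, rfl⟩ := mem_image.mp hx
      rw [← (Hg i).2]
      exact mem_erase.mpr ⟨hfg i, (Hf i).1⟩
    have := card_le_card hsub
    rw [card_image_of_injective _ hf, card_univ] at this
    omega

end Transversals

theorem descFactorial_le_card_filter_injective {α : Type*} [DecidableEq α] {t : ℕ} (m : ℕ)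
    (L : Fin t → Finset α) (hL : ∀ i, m ≤ #(L i)) :
    m.descFactorial t ≤ #{g ∈ Fintype.piFinset L | Injective g} := by
  induction t with
  | zero => simp [injective_of_subsingleton]
  | succ t ih =>
    set S := {g ∈ Fintype.piFinset (Fin.tail L) | Injective g}
    have hext (g : Fin t → α) : m - t ≤ #(L 0 \ univ.image g) :=
      calc m - t ≤ #(L 0) - #(univ.image g) :=
            tsub_le_tsub (hL 0) (card_image_le.trans_eq (card_fin t))
        _ ≤ #(L 0 \ univ.image g) := le_card_sdiff _ _
    calc m.descFactorial (t + 1) = (m - t) * m.descFactorial t := Nat.descFactorial_succ m t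
      _ ≤ (m - t) * #S := Nat.mul_le_mul_left _ (ih (Fin.tail L) fun i => hL _)
      _ ≤ ∑ g ∈ S, #(L 0 \ univ.image g) := by
        rw [mul_comm, ← smul_eq_mul]
        exact card_nsmul_le_sum _ _ _ fun g _ => hext g
      _ = #(S.sigma fun g => L 0 \ univ.image g) := (card_sigma _ _).symm
      _ ≤ #{g ∈ Fintype.piFinset L | Injective g} := by
        refine card_le_card_of_injOn (fun x => Fin.cons x.2 x.1) ?_ ?_
        · rintro ⟨g, c⟩ hx
          simp only [mem_coe, mem_sigma, mem_filter, mem_sdiff, mem_image_univ_iff_mem_range,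
            Fintype.mem_piFinset, S] at hx ⊢
          simp only [Fin.forall_fin_succ, Fin.cons_zero, Fin.cons_succ, Fin.cons_injective_iff]
          exact ⟨⟨hx.2.1, hx.1.1⟩, hx.2.2, hx.1.2⟩
        · rintro ⟨g, c⟩ - ⟨g', c'⟩ - h
          obtain ⟨rfl, rfl⟩ := Fin.cons_inj.mp h
          rfl

theorem Finset.exists_mem_forall_not_of_card_lt {β J : Type*} [Fintype J] {S : Finset β}
    (P : J → β → Prop) (hP : ∀ j, ∀ x ∈ S, ∀ y ∈ S, P j x → P j y → x = y)
    (h : Fintype.card J < #S) : ∃ x ∈ S, ∀ j, ¬ P j x := by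
  classical
  by_contra! hS
  have hcover : S ⊆ univ.biUnion fun j => {x ∈ S | P j x} := fun x hx => by
    obtain ⟨j, hj⟩ := hS x hx
    exact mem_biUnion.mpr ⟨j, mem_univ _, mem_filter.mpr ⟨hx, hj⟩⟩
  have hfiber (j : J) : #{x ∈ S | P j x} ≤ 1 := card_le_one.mpr fun x hx y hy =>
    hP j x (mem_filter.mp hx).1 y (mem_filter.mp hy).1 (mem_filter.mp hx).2 (mem_filter.mp hy).2
  have := (card_le_card hcover).trans
    (card_biUnion_le.trans (sum_le_card_nsmul _ _ 1 fun j _ => hfiber j))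
  simp only [card_univ, smul_eq_mul, mul_one] at this
  omega

theorem Choosable.mono {V : Type*} {G : SimpleGraph V} {m m' : ℕ} (h : Choosable G m)
    (hmm : m ≤ m') : Choosable G m' :=
  fun L hL => h L fun v => hmm.trans (hL v)

theorem listChromaticNumber_eq {V : Type*} {G : SimpleGraph V} {k : ℕ} (hk : Choosable G k)
    (hk' : ¬ Choosable G (k - 1)) : listChromaticNumber G = k := by
  obtain _ | k := k
  · exact absurd hk hk'
  exact (Nat.sInf_upward_closed_eq_succ_iff (fun _ _ h hm => Choosable.mono hm h) k).mpr
    ⟨hk, hk'⟩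

theorem starGraph_eq_starGraph_none (s : ℕ) : _root_.starGraph s = SimpleGraph.starGraph none :=
  rfl

theorem isProperListColoring_top_boxProd_starGraph_iff {ι W : Type*} {r : W}
    {L : ι × W → Finset ℕ} {F : ι × W → ℕ} :
    IsProperListColoring ((⊤ : SimpleGraph ι) □ SimpleGraph.starGraph r) L F ↔
      (∀ p, F p ∈ L p) ∧ (∀ c, Injective fun i => F (i, c)) ∧
        ∀ i c, c ≠ r → F (i, c) ≠ F (i, r) := by
  refine and_congr_right fun _ => ⟨fun h => ⟨fun c i i' hii' => ?_, fun i c hc => ?_⟩, ?_⟩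
  · by_contra hne
    exact h (i, c) (i', c) (boxProd_adj.mpr (Or.inl ⟨(top_adj _ _).mpr hne, rfl⟩)) hii'
  · exact h _ _ (boxProd_adj.mpr (Or.inr ⟨starGraph_center_adj' hc.symm, rfl⟩))
  · rintro ⟨hinj, hleaf⟩ ⟨i, c⟩ ⟨i', c'⟩ hadj
    rcases boxProd_adj.mp hadj with ⟨hii', rfl⟩ | ⟨hcc', rfl⟩
    · exact (hinj c).ne ((top_adj _ _).mp hii')
    · obtain ⟨hne, rfl | rfl⟩ := starGraph_adj.mp hcc'
      exacts [(hleaf i c' hne.symm).symm, hleaf i c hne]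

section StarProduct

variable {ι : Type*} {s : ℕ}

theorem listColorable_top_boxProd_starGraph {L : ι × Option (Fin s) → Finset ℕ}
    {f : ι → ℕ} (hf : Injective f) (hfL : ∀ i, f i ∈ L (i, none))
    (hleaf : ∀ j, ∃ g : ι → ℕ, Injective g ∧
      ∀ i, g i ∈ (L (i, some j)).erase (f i)) :
    ListColorable ((⊤ : SimpleGraph ι) □ _root_.starGraph s) L := by
  choose g hg hgL using hleaf
  rw [starGraph_eq_starGraph_none]
  refine ⟨fun p => p.2.elim (f p.1) fun j => g j p.1,
    isProperListColoring_top_boxProd_starGraph_iff.mpr ⟨?_, ?_, ?_⟩⟩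
  · rintro ⟨i, _ | j⟩
    exacts [hfL i, mem_of_mem_erase (hgL j i)]
  · rintro (_ | j)
    exacts [hf, hg j]
  · rintro i (_ | j) hj
    exacts [absurd rfl hj, ne_of_mem_erase (hgL j i)]

variable [Fintype ι]

theorem not_choosable_top_boxProd_starGraph_card_sub_one [Nonempty ι] :
    ¬ Choosable ((⊤ : SimpleGraph ι) □ _root_.starGraph s) (Fintype.card ι - 1) := by
  rw [starGraph_eq_starGraph_none]
  intro h
  obtain ⟨F, hF⟩ := h (fun _ => range (Fintype.card ι - 1)) (by simp)
  obtain ⟨hFL, hinj, -⟩ := isProperListColoring_top_boxProd_starGraph_iff.mp hF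
  have := card_le_card_of_injOn (fun i => F (i, none)) (s := univ)
    (fun i _ => hFL (i, none)) (hinj none).injOn
  simp only [card_univ, card_range] at this
  have := Fintype.card_pos (α := ι)
  omega

theorem choosable_top_boxProd_starGraph_card_add_one :
    Choosable ((⊤ : SimpleGraph ι) □ _root_.starGraph s) (Fintype.card ι + 1) := by
  intro L hL
  obtain ⟨f, hf, hfL⟩ := exists_injective_mem_of_card_le (fun i => L (i, none))
    fun i => (Nat.le_succ _).trans (hL _)
  refine listColorable_top_boxProd_starGraph hf hfL fun j =>
    exists_injective_mem_of_card_le _ fun i => ?_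
  have := hL (i, some j)
  have := pred_card_le_card_erase (s := L (i, some j)) (a := f i)
  omega

end StarProduct

section CompleteBoxStar

variable {n s : ℕ}

theorem choosable_top_boxProd_starGraph_of_lt_factorial (hs : s < n.factorial) :
    Choosable ((⊤ : SimpleGraph (Fin n)) □ _root_.starGraph s) n := by
  intro L hL
  have hL' (j : Fin s) (i : Fin n) : Fintype.card (Fin n) ≤ #(L (i, some j)) := by
    simpa using hL (i, some j)
  set S := {f ∈ Fintype.piFinset fun i => L (i, none) | Injective f}
  have hS : n.factorial ≤ #S := by
    simpa [Nat.descFactorial_self] using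
      descFactorial_le_card_filter_injective n (fun i => L (i, none)) fun i => hL _
  have hSs : Fintype.card (Fin s) < #S := by simpa using hs.trans_le hS
  have huniq (j : Fin s) : ∀ f ∈ S, ∀ g ∈ S,
      #(univ.biUnion fun i => (L (i, some j)).erase (f i)) < Fintype.card (Fin n) →
      #(univ.biUnion fun i => (L (i, some j)).erase (g i)) < Fintype.card (Fin n) → f = g :=
    fun f hf g _ => eq_of_card_biUnion_erase_lt _ (hL' j) (mem_filter.mp hf).2
  obtain ⟨f, hfS, hgood⟩ := exists_mem_forall_not_of_card_lt _ huniq hSs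
  rw [mem_filter, Fintype.mem_piFinset] at hfS
  refine listColorable_top_boxProd_starGraph hfS.2 hfS.1 fun j =>
    exists_injective_mem_of_card_le_card_biUnion _ (fun i => ?_) (not_lt.mp (hgood j))
  exact (Nat.sub_le_sub_right (hL' j i) 1).trans pred_card_le_card_erase

theorem not_choosable_top_boxProd_starGraph_of_factorial_le (hn : 0 < n) (hs : n.factorial ≤ s) :
    ¬ Choosable ((⊤ : SimpleGraph (Fin n)) □ _root_.starGraph s) n := by
  obtain ⟨π, hπ⟩ : ∃ π : Fin s → Equiv.Perm (Fin n), Surjective π :=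
    exists_surjective_iff.mpr ⟨⟨fun _ => 1⟩,
      Function.Embedding.nonempty_of_card_le (by simpa [Fintype.card_perm] using hs)⟩
  set A := Ico n (2 * n - 1)
  have hA : #A = n - 1 := by simp only [A, Nat.card_Ico]; omega
  set L : Fin n × Option (Fin s) → Finset ℕ :=
    fun p => p.2.elim (range n) fun j => insert (π j p.1 : ℕ) A
  have hL (p) : n ≤ #(L p) := by
    obtain ⟨i, _ | j⟩ := p
    · simp [L]
    · rw [show L (i, some j) = insert (π j i : ℕ) A from rfl,
        card_insert_of_notMem (by simp [A]), hA]
      omega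
  rw [starGraph_eq_starGraph_none]
  intro h
  obtain ⟨F, hF⟩ := h L hL
  obtain ⟨hFL, hinj, hleaf⟩ := isProperListColoring_top_boxProd_starGraph_iff.mp hF
  have hcenter (i : Fin n) : F (i, none) < n := by simpa [L] using hFL (i, none)
  let σ : Equiv.Perm (Fin n) := Equiv.ofBijective (fun i => ⟨F (i, none), hcenter i⟩)
    (Finite.injective_iff_bijective.mp fun i i' h => hinj none (congrArg Fin.val h))
  obtain ⟨j, hj⟩ := hπ σ
  have hA' (i : Fin n) : F (i, some j) ∈ A := by
    have := hFL (i, some j)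
    simp only [L, Option.elim_some, hj, σ, Equiv.ofBijective_apply, mem_insert] at this
    exact this.resolve_left (hleaf i (some j) (Option.some_ne_none j))
  have := card_le_card_of_injOn (fun i => F (i, some j)) (s := univ) (fun i _ => hA' i)
    (hinj (some j)).injOn
  simp only [card_univ, Fintype.card_fin, hA] at this
  omega

end CompleteBoxStar

/-- `χ_ℓ(K_n □ K_{1,s})` transitions from `n` to `n+1` at `s = n!`. -/
theorem stmt_16 (n s : ℕ) (hn : 2 ≤ n) :
    (s < Nat.factorial n →
      listChromaticNumber ((⊤ : SimpleGraph (Fin n)).boxProd (_root_.starGraph s)) = n) ∧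
    (Nat.factorial n ≤ s →
      listChromaticNumber ((⊤ : SimpleGraph (Fin n)).boxProd (_root_.starGraph s)) = n + 1) := by
  have hn0 : 0 < n := by omega
  have : Nonempty (Fin n) := ⟨⟨0, hn0⟩⟩
  refine ⟨fun hs => listChromaticNumber_eq ?_ ?_, fun hs => listChromaticNumber_eq ?_ ?_⟩
  · exact choosable_top_boxProd_starGraph_of_lt_factorial hs
  · simpa using not_choosable_top_boxProd_starGraph_card_sub_one (ι := Fin n) (s := s)
  · simpa using choosable_top_boxProd_starGraph_card_add_one (ι := Fin n) (s := s)
  · simpa using not_choosable_top_boxProd_starGraph_of_factorial_le hn0 hs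
end

section
/- Let G be the cycle C_{2l+1} with vertices v_1, …, v_{2l+1} in cyclic order, and let f : V(G) → ℕ satisfy f(v_i) = 1 for some i, f(v_j) = 3 for some j ≠ i, and f(v_t) = 2 for all other t. Then G is f-choosable: for every list assignment L with |L(v)| = f(v) for all v, G is L-colorable. -/
open SimpleGraph Finset

section AuxColoring

private noncomputable def pick (A : Finset ℕ) : ℕ := if h : A.Nonempty then h.choose else 0

private lemma pick_mem {A : Finset ℕ} (h : A.Nonempty) : pick A ∈ A := by
  rw [pick, dif_pos h]; exact h.choose_spec

private def wAux {n : ℕ} (i : Fin n) (k : ℕ) : Fin n :=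
  ⟨(i.val + k) % n, Nat.mod_lt _ i.pos⟩

private def ofsAux {n : ℕ} (i v : Fin n) : ℕ := (v.val + n - i.val) % n

private lemma ofs_lt {n : ℕ} (i v : Fin n) : ofsAux i v < n := Nat.mod_lt _ i.pos

private lemma w_ofs {n : ℕ} (i v : Fin n) : wAux i (ofsAux i v) = v := by
  apply Fin.ext
  show (i.val + (v.val + n - i.val) % n) % n = v.val
  rw [Nat.add_mod_mod]
  have h : i.val + (v.val + n - i.val) = v.val + n := by
    have := i.isLt; omega
  rw [h, Nat.add_mod_right, Nat.mod_eq_of_lt v.isLt]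

private lemma ofs_w {n : ℕ} (i : Fin n) (k : ℕ) : ofsAux i (wAux i k) = k % n := by
  have hn : 0 < n := i.pos
  show ((i.val + k) % n + n - i.val) % n = k % n
  obtain ⟨q, hq⟩ : ∃ q, i.val + k = n * q + (i.val + k) % n :=
    ⟨(i.val + k) / n, (Nat.div_add_mod _ n).symm⟩
  have hr : (i.val + k) % n < n := Nat.mod_lt _ hn
  have hi := i.isLt
  have h1 : (i.val + k) % n + n - i.val + n * q = k + n := by omega
  calc ((i.val + k) % n + n - i.val) % n
      = ((i.val + k) % n + n - i.val + n * q) % n := by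
        rw [Nat.add_mul_mod_self_left]
    _ = (k + n) % n := by rw [h1]
    _ = k % n := Nat.add_mod_right k n

private lemma w_zero {n : ℕ} (i : Fin n) : wAux i 0 = i := by
  apply Fin.ext
  show (i.val + 0) % n = i.val
  rw [Nat.add_zero, Nat.mod_eq_of_lt i.isLt]

private noncomputable def chainF {n : ℕ} (L : Fin n → Finset ℕ) (i : Fin n) : ℕ → ℕ
  | 0 => pick (L i)
  | t+1 => pick (L (wAux i (t+1)) \ {chainF L i t})

private noncomputable def chainB {n : ℕ} (L : Fin n → Finset ℕ) (i : Fin n) : ℕ → ℕ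
  | 0 => pick (L i)
  | s+1 => pick (L (wAux i (n - (s+1))) \ {chainB L i s})

private noncomputable def col {n : ℕ} (L : Fin n → Finset ℕ) (i : Fin n) (d : ℕ) (v : Fin n) : ℕ :=
  if ofsAux i v < d then chainF L i (ofsAux i v)
  else if ofsAux i v = d then
    pick (L (wAux i d) \ {chainF L i (d-1), chainB L i (n-d-1)})
  else chainB L i (n - ofsAux i v)

end AuxColoring

/-- an odd cycle is `f`-choosable when `f` is 1 at one vertex, 3 at
another, and 2 elsewhere. -/
theorem stmt_17 (l : ℕ) (hl : 1 ≤ l) (f : Fin (2 * l + 1) → ℕ)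
    (i j : Fin (2 * l + 1)) (hij : i ≠ j) (hfi : f i = 1) (hfj : f j = 3)
    (hft : ∀ t : Fin (2 * l + 1), t ≠ i → t ≠ j → f t = 2)
    (L : Fin (2 * l + 1) → Finset ℕ) (hL : ∀ v, (L v).card = f v) :
    ListColorable (cycGraph (2 * l + 1)) L := by
  have hn3 : 3 ≤ 2 * l + 1 := by omega
  set d := ofsAux i j with hddef
  have hdn : d < 2 * l + 1 := ofs_lt i j
  have hwd : wAux i d = j := w_ofs i j
  have hw0 : wAux i 0 = i := w_zero i
  have hd1 : 1 ≤ d := by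
    rcases Nat.eq_zero_or_pos d with h | h
    · exact absurd (show i = j by rw [← hwd, h, hw0]) hij
    · exact h
  have winj : ∀ k k' : ℕ, k < 2 * l + 1 → k' < 2 * l + 1 → wAux i k = wAux i k' → k = k' := by
    intro k k' hk hk' h
    have := congrArg (ofsAux i) h
    rwa [ofs_w, ofs_w, Nat.mod_eq_of_lt hk, Nat.mod_eq_of_lt hk'] at this
  have two_le : ∀ v : Fin (2 * l + 1), v ≠ i → 2 ≤ (L v).card := by
    intro v hv
    by_cases hvj : v = j
    · rw [hvj, hL, hfj]; omega
    · rw [hL, hft v hv hvj]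
  have hF0 : chainF L i 0 ∈ L i := by
    have : (L i).Nonempty := by
      rw [← Finset.card_pos, hL, hfi]; omega
    simpa [chainF] using pick_mem this
  have hB0 : chainB L i 0 = chainF L i 0 := rfl
  have hFs : ∀ t : ℕ, t + 1 < d →
      chainF L i (t+1) ∈ L (wAux i (t+1)) \ {chainF L i t} := by
    intro t ht
    have hne : wAux i (t+1) ≠ i := by
      intro h
      have := winj (t+1) 0 (by omega) (by omega) (by rw [h, hw0])
      omega
    have h2 : 2 ≤ (L (wAux i (t+1))).card := two_le _ hne
    have hcard := Finset.le_card_sdiff ({chainF L i t} : Finset ℕ) (L (wAux i (t+1)))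
    rw [Finset.card_singleton] at hcard
    have : (L (wAux i (t+1)) \ {chainF L i t}).Nonempty := by
      rw [← Finset.card_pos]; omega
    simpa [chainF] using pick_mem this
  have hBs : ∀ s : ℕ, s + 1 ≤ 2 * l + 1 - d - 1 →
      chainB L i (s+1) ∈ L (wAux i (2 * l + 1 - (s+1))) \ {chainB L i s} := by
    intro s hs
    have hne : wAux i (2 * l + 1 - (s+1)) ≠ i := by
      intro h
      have := winj (2 * l + 1 - (s+1)) 0 (by omega) (by omega) (by rw [h, hw0])
      omega
    have h2 : 2 ≤ (L (wAux i (2 * l + 1 - (s+1)))).card := two_le _ hne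
    have hcard := Finset.le_card_sdiff ({chainB L i s} : Finset ℕ)
      (L (wAux i (2 * l + 1 - (s+1))))
    rw [Finset.card_singleton] at hcard
    have : (L (wAux i (2 * l + 1 - (s+1))) \ {chainB L i s}).Nonempty := by
      rw [← Finset.card_pos]; omega
    simpa [chainB] using pick_mem this
  have hJm : pick (L (wAux i d) \ {chainF L i (d-1), chainB L i (2 * l + 1 - d - 1)}) ∈
      L j \ {chainF L i (d-1), chainB L i (2 * l + 1 - d - 1)} := by
    rw [hwd]
    apply pick_mem
    rw [← Finset.card_pos]
    have h3 : (L j).card = 3 := by rw [hL, hfj]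
    have hpair : ({chainF L i (d-1), chainB L i (2 * l + 1 - d - 1)} : Finset ℕ).card ≤ 2 :=
      (Finset.card_insert_le _ _).trans (by simp)
    have hcard := Finset.le_card_sdiff
      ({chainF L i (d-1), chainB L i (2 * l + 1 - d - 1)} : Finset ℕ) (L j)
    omega
  have hJne := (Finset.mem_sdiff.1 hJm).2
  rw [Finset.mem_insert, Finset.mem_singleton] at hJne
  push_neg at hJne
  refine ⟨col L i d, ?_, ?_⟩
  · intro v
    have hkn : ofsAux i v < 2 * l + 1 := ofs_lt i v
    have hv : wAux i (ofsAux i v) = v := w_ofs i v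
    by_cases h1 : ofsAux i v < d
    · rw [col, if_pos h1]
      rcases Nat.eq_zero_or_pos (ofsAux i v) with h0 | h0
      · rw [h0]
        rw [h0, hw0] at hv
        rw [← hv]; exact hF0
      · obtain ⟨t, ht⟩ : ∃ t, ofsAux i v = t + 1 := ⟨ofsAux i v - 1, by omega⟩
        rw [ht]
        have := (Finset.mem_sdiff.1 (hFs t (by omega))).1
        rw [ht] at hv
        rwa [hv] at this
    · by_cases h2 : ofsAux i v = d
      · rw [col, if_neg h1, if_pos h2]
        have hvj : v = j := by rw [← hv, h2, hwd]
        rw [hvj]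
        exact (Finset.mem_sdiff.1 hJm).1
      · rw [col, if_neg h1, if_neg h2]
        have hk : d < ofsAux i v := by omega
        have he : 2 * l + 1 - ofsAux i v = (2 * l + 1 - ofsAux i v - 1) + 1 := by omega
        have hmem := (Finset.mem_sdiff.1 (hBs (2 * l + 1 - ofsAux i v - 1) (by omega))).1
        rw [← he] at hmem
        have he2 : 2 * l + 1 - (2 * l + 1 - ofsAux i v) = ofsAux i v := by omega
        rw [he2, hv] at hmem
        exact hmem
  · have key : ∀ u v : Fin (2 * l + 1), v.val = (u.val + 1) % (2 * l + 1) →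
        col L i d u ≠ col L i d v := by
      intro u v huv
      have hkn : ofsAux i u < 2 * l + 1 := ofs_lt i u
      have hu : wAux i (ofsAux i u) = u := w_ofs i u
      have hu' := congrArg Fin.val hu
      have hv' : v = wAux i (ofsAux i u + 1) := by
        apply Fin.ext
        rw [huv, ← hu']
        show ((i.val + ofsAux i u) % (2 * l + 1) + 1) % (2 * l + 1)
          = (i.val + (ofsAux i u + 1)) % (2 * l + 1)
        rw [Nat.mod_add_mod, Nat.add_assoc]
      have hofv : ofsAux i v = (ofsAux i u + 1) % (2 * l + 1) := by rw [hv', ofs_w]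
      by_cases hklast : ofsAux i u = 2 * l
      · have h0 : ofsAux i v = 0 := by
          rw [hofv, hklast]
          have : 2 * l + 1 = 2 * l + 1 := rfl
          exact Nat.mod_self _
        by_cases hkd : ofsAux i u = d
        · rw [col, col, h0, if_pos (show (0:ℕ) < d by omega),
            if_neg (show ¬ ofsAux i u < d by omega), if_pos hkd]
          intro hcontra
          apply hJne.2
          have hnd : 2 * l + 1 - d - 1 = 0 := by omega
          conv_rhs => rw [hnd, hB0]
          exact hcontra
        · rw [col, col, h0, if_pos (show (0:ℕ) < d by omega),
            if_neg (show ¬ ofsAux i u < d by omega), if_neg hkd]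
          have hnk : 2 * l + 1 - ofsAux i u = 1 := by omega
          rw [hnk]
          have hmem := (Finset.mem_sdiff.1 (hBs 0 (by omega))).2
          rw [Finset.mem_singleton, hB0] at hmem
          exact hmem
      · have hofv' : ofsAux i v = ofsAux i u + 1 := by
          rw [hofv, Nat.mod_eq_of_lt (by omega)]
        by_cases h1 : ofsAux i u + 1 < d
        · rw [col, col, hofv', if_pos (show ofsAux i u < d by omega), if_pos h1]
          have := (Finset.mem_sdiff.1 (hFs (ofsAux i u) h1)).2
          rw [Finset.mem_singleton] at this
          exact fun hc => this hc.symm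
        · by_cases h2 : ofsAux i u + 1 = d
          · rw [col, col, hofv', if_pos (show ofsAux i u < d by omega),
              if_neg h1, if_pos h2]
            have hdm : ofsAux i u = d - 1 := by omega
            rw [hdm]
            exact fun hc => hJne.1 hc.symm
          · by_cases h3 : ofsAux i u = d
            · rw [col, col, hofv', if_neg (show ¬ ofsAux i u < d by omega), if_pos h3,
                if_neg (show ¬ ofsAux i u + 1 < d by omega),
                if_neg (show ¬ ofsAux i u + 1 = d by omega)]
              have hnd : 2 * l + 1 - (ofsAux i u + 1) = 2 * l + 1 - d - 1 := by omega
              rw [hnd]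
              exact hJne.2
            · rw [col, col, hofv', if_neg (show ¬ ofsAux i u < d by omega), if_neg h3,
                if_neg (show ¬ ofsAux i u + 1 < d by omega),
                if_neg (show ¬ ofsAux i u + 1 = d by omega)]
              have he : 2 * l + 1 - ofsAux i u = (2 * l + 1 - (ofsAux i u + 1)) + 1 := by
                omega
              have hmem := (Finset.mem_sdiff.1
                (hBs (2 * l + 1 - (ofsAux i u + 1)) (by omega))).2
              rw [← he, Finset.mem_singleton] at hmem
              exact hmem
    intro u v huv
    rw [cycGraph, SimpleGraph.fromRel_adj] at huv
    rcases huv.2 with h | h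
    · exact key u v h
    · exact (key v u h).symm
end

section
/- For k ≥ 3, every D_k-graph satisfies the edge condition: if G = D_k(X, Y_1, Y_2, x_1, x_2) has n vertices and m edges, then m ≤ n(k−2). -/
open SimpleGraph Finset

/-- every `D_k`-graph satisfies the edge condition `m ≤ n(k-2)`. -/
theorem stmt_19 {V : Type*} [Fintype V] [DecidableEq V] (G : SimpleGraph V)
    [Fintype G.edgeSet] (k : ℕ) (hk : 3 ≤ k)
    (X Y1 Y2 : Finset V) (x1 x2 : V)
    (hX : X.Nonempty) (hY1 : Y1.Nonempty) (hY2 : Y2.Nonempty)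
    (hXY1 : Disjoint X Y1) (hXY2 : Disjoint X Y2) (hY12 : Disjoint Y1 Y2)
    (hx1 : x1 ∉ X ∪ Y1 ∪ Y2) (hx2 : x2 ∉ X ∪ Y1 ∪ Y2) (hx12 : x1 ≠ x2)
    (hcardY : Y1.card + Y2.card = k - 1) (hcardX : X.card + 1 = k - 1)
    (hcover : ∀ v : V, v ∈ X ∪ Y1 ∪ Y2 ∪ {x1, x2})
    (hAdj : ∀ u v : V, G.Adj u v ↔ u ≠ v ∧
      ((u ∈ X ∧ v ∈ X) ∨ (u ∈ Y1 ∪ Y2 ∧ v ∈ Y1 ∪ Y2) ∨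
        (u = x1 ∧ v ∈ X ∪ Y1) ∨ (v = x1 ∧ u ∈ X ∪ Y1) ∨
        (u = x2 ∧ v ∈ X ∪ Y2) ∨ (v = x2 ∧ u ∈ X ∪ Y2))) :
    G.edgeFinset.card ≤ Fintype.card V * (k - 2) := by
  classical
  simp only [Finset.mem_union, not_or] at hx1 hx2
  obtain ⟨⟨hx1X, hx1Y1⟩, hx1Y2⟩ := hx1
  obtain ⟨⟨hx2X, hx2Y1⟩, hx2Y2⟩ := hx2
  have hXc : X.card = k - 2 := by omega
  have hY1c : Y1.card ≤ k - 2 := by have := hY2.card_pos; omega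
  have hY2c : Y2.card ≤ k - 2 := by have := hY1.card_pos; omega
  have dX1 := Finset.disjoint_left.mp hXY1
  have dX2 := Finset.disjoint_left.mp hXY2
  have d12 := Finset.disjoint_left.mp hY12
  have hdeg : ∀ v : V, G.degree v ≤ 2 * (k - 2) := by
    intro v
    rw [SimpleGraph.degree]
    have hv := hcover v
    simp only [Finset.mem_union, Finset.mem_insert, Finset.mem_singleton] at hv
    rcases hv with (((hvX | hvY1) | hvY2) | hv1 | hv2)
    · -- v ∈ X
      have hsub : G.neighborFinset v ⊆ insert x1 (insert x2 (X.erase v)) := by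
        intro u hu
        rw [SimpleGraph.mem_neighborFinset, hAdj] at hu
        obtain ⟨hne, hc⟩ := hu
        simp only [Finset.mem_insert, Finset.mem_erase, Finset.mem_union] at hc ⊢
        rcases hc with ⟨h1, h2⟩ | ⟨h1, h2⟩ | ⟨h1, h2⟩ | ⟨h1, h2⟩ | ⟨h1, h2⟩ | ⟨h1, h2⟩
        · exact Or.inr (Or.inr ⟨fun h => hne h.symm, h2⟩)
        · rcases h1 with h | h
          · exact (dX1 hvX h).elim
          · exact (dX2 hvX h).elim
        · exact (hx1X (h1 ▸ hvX)).elim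
        · exact Or.inl h1
        · exact (hx2X (h1 ▸ hvX)).elim
        · exact Or.inr (Or.inl h1)
      calc (G.neighborFinset v).card ≤ (insert x1 (insert x2 (X.erase v))).card :=
            Finset.card_le_card hsub
        _ ≤ (X.erase v).card + 2 := by
            have := Finset.card_insert_le x1 (insert x2 (X.erase v))
            have := Finset.card_insert_le x2 (X.erase v)
            omega
        _ ≤ 2 * (k - 2) := by
            rw [Finset.card_erase_of_mem hvX]; omega
    · -- v ∈ Y1
      have hsub : G.neighborFinset v ⊆ insert x1 ((Y1 ∪ Y2).erase v) := by
        intro u hu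
        rw [SimpleGraph.mem_neighborFinset, hAdj] at hu
        obtain ⟨hne, hc⟩ := hu
        simp only [Finset.mem_insert, Finset.mem_erase, Finset.mem_union] at hc ⊢
        rcases hc with ⟨h1, h2⟩ | ⟨h1, h2⟩ | ⟨h1, h2⟩ | ⟨h1, h2⟩ | ⟨h1, h2⟩ | ⟨h1, h2⟩
        · exact (dX1 h1 hvY1).elim
        · exact Or.inr ⟨fun h => hne h.symm, h2⟩
        · exact (hx1Y1 (h1 ▸ hvY1)).elim
        · exact Or.inl h1
        · exact (hx2Y1 (h1 ▸ hvY1)).elim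
        · rcases h2 with h | h
          · exact (dX1 h hvY1).elim
          · exact (d12 hvY1 h).elim
      calc (G.neighborFinset v).card ≤ (insert x1 ((Y1 ∪ Y2).erase v)).card :=
            Finset.card_le_card hsub
        _ ≤ ((Y1 ∪ Y2).erase v).card + 1 := Finset.card_insert_le _ _
        _ ≤ 2 * (k - 2) := by
            rw [Finset.card_erase_of_mem (Finset.mem_union_left _ hvY1),
              Finset.card_union_of_disjoint hY12]
            omega
    · -- v ∈ Y2
      have hsub : G.neighborFinset v ⊆ insert x2 ((Y1 ∪ Y2).erase v) := by
        intro u hu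
        rw [SimpleGraph.mem_neighborFinset, hAdj] at hu
        obtain ⟨hne, hc⟩ := hu
        simp only [Finset.mem_insert, Finset.mem_erase, Finset.mem_union] at hc ⊢
        rcases hc with ⟨h1, h2⟩ | ⟨h1, h2⟩ | ⟨h1, h2⟩ | ⟨h1, h2⟩ | ⟨h1, h2⟩ | ⟨h1, h2⟩
        · exact (dX2 h1 hvY2).elim
        · exact Or.inr ⟨fun h => hne h.symm, h2⟩
        · exact (hx1Y2 (h1 ▸ hvY2)).elim
        · rcases h2 with h | h
          · exact (dX2 h hvY2).elim
          · exact (d12 h hvY2).elim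
        · exact (hx2Y2 (h1 ▸ hvY2)).elim
        · exact Or.inl h1
      calc (G.neighborFinset v).card ≤ (insert x2 ((Y1 ∪ Y2).erase v)).card :=
            Finset.card_le_card hsub
        _ ≤ ((Y1 ∪ Y2).erase v).card + 1 := Finset.card_insert_le _ _
        _ ≤ 2 * (k - 2) := by
            rw [Finset.card_erase_of_mem (Finset.mem_union_right _ hvY2),
              Finset.card_union_of_disjoint hY12]
            omega
    · -- v = x1
      have hsub : G.neighborFinset v ⊆ X ∪ Y1 := by
        intro u hu
        rw [SimpleGraph.mem_neighborFinset, hAdj] at hu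
        obtain ⟨hne, hc⟩ := hu
        simp only [Finset.mem_union] at hc ⊢
        rcases hc with ⟨h1, h2⟩ | ⟨h1, h2⟩ | ⟨h1, h2⟩ | ⟨h1, h2⟩ | ⟨h1, h2⟩ | ⟨h1, h2⟩
        · exact (hx1X (hv1 ▸ h1)).elim
        · rcases h1 with h | h
          · exact (hx1Y1 (hv1 ▸ h)).elim
          · exact (hx1Y2 (hv1 ▸ h)).elim
        · exact h2
        · exact (hne (hv1.trans h1.symm)).elim
        · exact (hx12 (hv1.symm.trans h1)).elim
        · rcases h2 with h | h
          · exact (hx1X (hv1 ▸ h)).elim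
          · exact (hx1Y2 (hv1 ▸ h)).elim
      calc (G.neighborFinset v).card ≤ (X ∪ Y1).card := Finset.card_le_card hsub
        _ ≤ X.card + Y1.card := Finset.card_union_le _ _
        _ ≤ 2 * (k - 2) := by omega
    · -- v = x2
      have hsub : G.neighborFinset v ⊆ X ∪ Y2 := by
        intro u hu
        rw [SimpleGraph.mem_neighborFinset, hAdj] at hu
        obtain ⟨hne, hc⟩ := hu
        simp only [Finset.mem_union] at hc ⊢
        rcases hc with ⟨h1, h2⟩ | ⟨h1, h2⟩ | ⟨h1, h2⟩ | ⟨h1, h2⟩ | ⟨h1, h2⟩ | ⟨h1, h2⟩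
        · exact (hx2X (hv2 ▸ h1)).elim
        · rcases h1 with h | h
          · exact (hx2Y1 (hv2 ▸ h)).elim
          · exact (hx2Y2 (hv2 ▸ h)).elim
        · exact (hx12 (hv2.symm.trans h1).symm).elim
        · rcases h2 with h | h
          · exact (hx2X (hv2 ▸ h)).elim
          · exact (hx2Y1 (hv2 ▸ h)).elim
        · exact h2
        · exact (hne (hv2.trans h1.symm)).elim
      calc (G.neighborFinset v).card ≤ (X ∪ Y2).card := Finset.card_le_card hsub
        _ ≤ X.card + Y2.card := Finset.card_union_le _ _
        _ ≤ 2 * (k - 2) := by omega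
  have hsum : ∑ v : V, G.degree v = 2 * G.edgeFinset.card := by
    have h := G.sum_degrees_eq_twice_card_edges
    rwa [Subsingleton.elim G.fintypeEdgeSet ‹Fintype G.edgeSet›] at h
  have hbound : ∑ v : V, G.degree v ≤ Fintype.card V * (2 * (k - 2)) := by
    calc ∑ v : V, G.degree v ≤ ∑ _v : V, 2 * (k - 2) :=
          Finset.sum_le_sum fun v _ => hdeg v
      _ = Fintype.card V * (2 * (k - 2)) := by
          rw [Finset.sum_const, Finset.card_univ, smul_eq_mul]
  have h2 : 2 * G.edgeFinset.card ≤ 2 * (Fintype.card V * (k - 2)) := by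
    rw [← hsum]
    calc ∑ v : V, G.degree v ≤ Fintype.card V * (2 * (k - 2)) := hbound
      _ = 2 * (Fintype.card V * (k - 2)) := by ring
  omega
end
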